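/- arXiv:1311.0809 — 17 statements merged into one kernel-verified Lean document; each statement's English description precedes it below -/
import Mathlib

section
/- Let a 3-stage stiffly accurate diagonally implicit SRK tableau with real parameter λ satisfy the strong order-1.0 conditions (3), (5), (7), (10) and (11). Then λ = 0 or λ = 1. -/
/-!
Conditions (10) and (11) say `B2_32 * B2_21 = 0` and `B1_32 * B2_21 + B2_32 * B1_21 = 0`; over a
reduced ring these force both cross products `B1_32 * B2_21` and `B2_32 * B1_21` to vanish. By (5)
and (3), `λ (1 - λ) = 2 B1_32 B1_21 (1 - λ)`, and (7) turns the right-hand side into a combination of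
those two products, so `λ (1 - λ) = 0`.
-/

theorem mul_eq_zero_and_mul_eq_zero_of_mul_add_mul_eq_zero {R : Type*} [CommRing R] [IsReduced R]
    {a b c d : R} (hab : a * b = 0) (h : c * b + a * d = 0) : c * b = 0 ∧ a * d = 0 := by
  have had : a * d = 0 := by
    refine IsReduced.eq_zero _ ⟨2, ?_⟩
    linear_combination (-(c * d)) * hab + (a * d) * h
  exact ⟨by linear_combination h - had, had⟩

theorem srk_lambda_zero_or_one_general
    (B1_21 B1_32 : ℝ)
    (B2_21 B2_31 B2_32 : ℝ)
    (B3_11 B3_21 B3_22 B3_32 : ℝ)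
    (lam : ℝ)
    (h3 : B2_31 + B2_32 = 0)
    (h5 : B1_32 * B1_21 = lam / 2)
    (h7 : B2_31 * B3_11 + B2_32 * (B3_21 + B3_22) + B3_32 * B2_21 = 1 - lam)
    (h10 : B2_32 * B2_21 = 0)
    (h11 : B1_32 * B2_21 + B2_32 * B1_21 = 0) :
    lam = 0 ∨ lam = 1 := by
  obtain ⟨h12, h21⟩ := mul_eq_zero_and_mul_eq_zero_of_mul_add_mul_eq_zero h10 h11
  have hlam : lam * (1 - lam) = 0 := by
    linear_combination (-2 * (1 - lam)) * h5 + (-2 * B1_32 * B1_21) * h7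
      + (2 * B1_32 * B1_21 * B3_11) * h3 + (2 * B1_32 * (B3_21 + B3_22 - B3_11)) * h21
      + (2 * B1_21 * B3_32) * h12
  rcases mul_eq_zero.mp hlam with h | h
  · exact Or.inl h
  · exact Or.inr (sub_eq_zero.mp h).symm

/-- For a 3-stage stiffly accurate diagonally implicit SRK tableau, the strong
order-1.0 conditions (3), (5), (7), (10) and (11) force the parameter λ to be
0 or 1. The nonzero entries of the strictly lower triangular matrices `B1`, `B2`
and of the lower triangular matrices `A`, `B3` appear as real variables; all
other entries vanish by the diagonally implicit shape of the tableau. -/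
theorem srk_lambda_zero_or_one
    (A11 A21 A22 A31 A32 A33 : ℝ)
    (B1_21 B1_31 B1_32 : ℝ)
    (B2_21 B2_31 B2_32 : ℝ)
    (B3_11 B3_21 B3_22 B3_31 B3_32 B3_33 : ℝ)
    (lam : ℝ)
    (h3 : B2_31 + B2_32 = 0)
    (h5 : B1_32 * B1_21 = lam / 2)
    (h7 : B2_31 * B3_11 + B2_32 * (B3_21 + B3_22) + B3_32 * B2_21 = 1 - lam)
    (h10 : B2_32 * B2_21 = 0)
    (h11 : B1_32 * B2_21 + B2_32 * B1_21 = 0) :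
    lam = 0 ∨ lam = 1 :=
  srk_lambda_zero_or_one_general B1_21 B1_32 B2_21 B2_31 B2_32 B3_11 B3_21 B3_22 B3_32 lam h3 h5 h7
    h10 h11
end

section
/- Let a 3-stage stiffly accurate diagonally implicit SRK tableau with real parameter λ satisfy the strong order-1.0 conditions (3), (5), (7), (10) and (11). Then λ = 1 if and only if B2 = 0 (i.e. B2_21 = B2_31 = B2_32 = 0). -/
theorem eq_zero_and_eq_zero_of_mul_eq_zero_of_mul_add_mul_eq_zero {R : Type*} [Semiring R]
    [NoZeroDivisors R] {a b x y : R} (ha : a ≠ 0) (hb : b ≠ 0) (hyx : y * x = 0)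
    (h : a * x + y * b = 0) : x = 0 ∧ y = 0 := by
  rcases mul_eq_zero.mp hyx with hy | hx
  · subst hy
    exact ⟨(mul_eq_zero.mp (by simpa using h)).resolve_left ha, rfl⟩
  · subst hx
    exact ⟨rfl, (mul_eq_zero.mp (by simpa using h)).resolve_right hb⟩

theorem srk_lambda_eq_one_iff_B2_eq_zero_general
    (B1_21 B1_32 : ℝ)
    (B2_21 B2_31 B2_32 : ℝ)
    (B3_11 B3_21 B3_22 B3_32 : ℝ)
    (lam : ℝ)
    (h3 : B2_31 + B2_32 = 0)
    (h5 : B1_32 * B1_21 = lam / 2)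
    (h7 : B2_31 * B3_11 + B2_32 * (B3_21 + B3_22) + B3_32 * B2_21 = 1 - lam)
    (h10 : B2_32 * B2_21 = 0)
    (h11 : B1_32 * B2_21 + B2_32 * B1_21 = 0) :
    lam = 1 ↔ (B2_21 = 0 ∧ B2_31 = 0 ∧ B2_32 = 0) := by
  constructor
  · rintro rfl
    have hB1 : B1_32 * B1_21 ≠ 0 := by
      rw [h5]
      norm_num
    obtain ⟨h21, h32⟩ := eq_zero_and_eq_zero_of_mul_eq_zero_of_mul_add_mul_eq_zero
      (left_ne_zero_of_mul hB1) (right_ne_zero_of_mul hB1) h10 h11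
    exact ⟨h21, by linarith, h32⟩
  · rintro ⟨h21, h31, h32⟩
    rw [h21, h31, h32] at h7
    linarith

/-- For a 3-stage stiffly accurate diagonally implicit SRK tableau satisfying
the strong order-1.0 conditions (3), (5), (7), (10) and (11), one has λ = 1
if and only if the matrix B2 vanishes, i.e. B2_21 = B2_31 = B2_32 = 0
(all other entries of B2 are zero by the shape of the tableau). -/
theorem srk_lambda_eq_one_iff_B2_eq_zero
    (A11 A21 A22 A31 A32 A33 : ℝ)
    (B1_21 B1_31 B1_32 : ℝ)
    (B2_21 B2_31 B2_32 : ℝ)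
    (B3_11 B3_21 B3_22 B3_31 B3_32 B3_33 : ℝ)
    (lam : ℝ)
    (h3 : B2_31 + B2_32 = 0)
    (h5 : B1_32 * B1_21 = lam / 2)
    (h7 : B2_31 * B3_11 + B2_32 * (B3_21 + B3_22) + B3_32 * B2_21 = 1 - lam)
    (h10 : B2_32 * B2_21 = 0)
    (h11 : B1_32 * B2_21 + B2_32 * B1_21 = 0) :
    lam = 1 ↔ (B2_21 = 0 ∧ B2_31 = 0 ∧ B2_32 = 0) :=
  srk_lambda_eq_one_iff_B2_eq_zero_general B1_21 B1_32 B2_21 B2_31 B2_32 B3_11 B3_21 B3_22 B3_32 lam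
    h3 h5 h7 h10 h11
end

section
/- There exist no real numbers A_11, A_21, A_22, B1_21, B2_21, B3_11, B3_21, B3_22 and λ ∈ ℝ such that the 2-stage instances of the strong order-1.0 conditions (3), (5) and (7) hold simultaneously; that is, the system B2_21 = 0, 0 = λ/2, and B2_21·B3_11 + B3_22·B2_21 = 1 − λ has no solution. Consequently, at least 3 stages are needed for a stiffly accurate diagonally implicit SRK method of strong order 1.0. -/
/-- There is no 2-stage stiffly accurate diagonally implicit SRK tableau
satisfying the strong order-1.0 conditions (3), (5) and (7): the system
B2_21 = 0, 0 = λ/2 and B2_21·B3_11 + B3_22·B2_21 = 1 - λ is unsolvable.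
Hence at least 3 stages are needed for strong order 1.0. -/
theorem no_two_stage_strong_order_one :
    ¬ ∃ (A11 A21 A22 B1_21 B2_21 B3_11 B3_21 B3_22 lam : ℝ),
        B2_21 = 0 ∧
        (0 : ℝ) = lam / 2 ∧
        B2_21 * B3_11 + B3_22 * B2_21 = 1 - lam := by
  rintro ⟨-, -, -, -, B2_21, B3_11, -, B3_22, lam, rfl, hlam, h7⟩
  -- with B2_21 = 0 condition (7) forces lam = 1, while condition (5) forces lam = 0
  linarith
end

section
/- (Class I, λ=1.) For all real A_11, A_22, A_33, B3_22f and all real B3_32f ≠ 0, the 3-stage tableau with A_21 = (A_11 − 4·A_22·(B3_32f)² + 4·(B3_32f)² − 1)/(4·(B3_32f)²), A_31 = 1 − A_33, A_32 = 0, B1_21 = 1, B1_31 = 1/2, B1_32 = 1/2, B2 = 0, B3_11 = 0, B3_21 = −(1 + 2·B3_22f·B3_32f)/(2·B3_32f), B3_22 = B3_22f, B3_31 = −1/(4·B3_32f), B3_32 = B3_32f, B3_33 = −(4·(B3_32f)² − 1)/(4·B3_32f) satisfies all strong order-1.0 conditions (1)–(14) with λ = 1. -/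
open Matrix

/-- Euclidean dot product on ℝ³. -/
def dot3 (u v : Fin 3 → ℝ) : ℝ := ∑ i, u i * v i

/-- The strong order-1.0 conditions (1)–(14) for a 3-stage stiffly accurate
diagonally implicit SRK tableau (A, B1, B2, B3) with parameter λ.  Conditions
(1)–(12) are written in the simplified scalar form valid for such tableaux
(A, B3 lower triangular, B1, B2 strictly lower triangular); conditions (13)
and (14) are written with e = (1,1,1), βk the last row of Bk, componentwise
products of vectors, and matrix–vector products. -/
def SRKOrder1Conds (A B1 B2 B3 : Matrix (Fin 3) (Fin 3) ℝ) (lam : ℝ) : Prop :=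
  let e : Fin 3 → ℝ := ![1, 1, 1]
  let β1 : Fin 3 → ℝ := fun j => B1 2 j
  let β2 : Fin 3 → ℝ := fun j => B2 2 j
  let β3 : Fin 3 → ℝ := fun j => B3 2 j
  let B1e := B1.mulVec e
  let B2e := B2.mulVec e
  let B3e := B3.mulVec e
  -- (1)
  A 2 0 + A 2 1 + A 2 2 = 1 ∧
  -- (2)
  B1 2 0 + B1 2 1 = 1 ∧
  -- (3)
  B2 2 0 + B2 2 1 = 0 ∧
  -- (4)
  B3 2 0 + B3 2 1 + B3 2 2 = 0 ∧
  -- (5)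
  B1 2 1 * B1 1 0 = lam / 2 ∧
  -- (6)
  B3 2 0 * B3 0 0 + B3 2 1 * (B3 1 0 + B3 1 1) = -lam / 2 ∧
  -- (7)
  B2 2 0 * B3 0 0 + B2 2 1 * (B3 1 0 + B3 1 1) + B3 2 1 * B2 1 0 = 1 - lam ∧
  -- (8)
  A 2 0 * B3 0 0 + A 2 1 * (B3 1 0 + B3 1 1) = 0 ∧
  -- (9)
  B1 2 0 * B3 0 0 + B1 2 1 * (B3 1 0 + B3 1 1) + B3 2 1 * B1 1 0 + B3 2 2 = 0 ∧
  -- (10)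
  B2 2 1 * B2 1 0 = 0 ∧
  -- (11)
  B1 2 1 * B2 1 0 + B2 2 1 * B1 1 0 = 0 ∧
  -- (12)
  B3 2 0 * A 0 0 + B3 2 1 * (A 1 0 + A 1 1) + B3 2 2 = 0 ∧
  -- (13)
  (2 * dot3 β1 (fun i => B1e i * B2e i) + 2 * dot3 β1 (fun i => B1e i * B3e i)
    + dot3 β2 (fun i => B1e i * B1e i) + dot3 β2 (fun i => B2e i * B2e i)
    + dot3 β2 (fun i => B2e i * B3e i) + dot3 β3 (fun i => B1e i * B1e i)
    + (1/2) * dot3 β3 (fun i => B2e i * B2e i)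
    + dot3 β3 (fun i => B3e i * B3e i) = 0) ∧
  -- (14)
  (dot3 β1 (B1.mulVec B2e) + dot3 β1 (B2.mulVec B1e) + dot3 β1 (B1.mulVec B3e)
    + dot3 β1 (B3.mulVec B1e) + dot3 β2 (B1.mulVec B1e) + dot3 β2 (B2.mulVec B2e)
    + (1/2) * dot3 β2 (B2.mulVec B3e) + (1/2) * dot3 β2 (B3.mulVec B2e)
    + dot3 β3 (B1.mulVec B1e) + (1/2) * dot3 β3 (B2.mulVec B2e)
    + dot3 β3 (B3.mulVec B3e) = 0)

/-! With `B2 = 0` the conditions (3), (10), (11) hold trivially, (7) forces `λ = 1`, and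
(13), (14) lose every term containing `B2`. The row sums of the Class I tableau are
`B1 e = (0, 1, 1)` and `B3 e = (0, -1/(2 B3_32), 0)`, after which every remaining condition is a
rational identity in the free parameters with denominators powers of `B3_32 ≠ 0`. -/

open Matrix

theorem dot3_eq_dotProduct (u v : Fin 3 → ℝ) : dot3 u v = u ⬝ᵥ v := rfl

theorem srkOrder1Conds_of_B2_eq_zero {A B1 B3 : Matrix (Fin 3) (Fin 3) ℝ}
    (h1 : A 2 0 + A 2 1 + A 2 2 = 1) (h2 : B1 2 0 + B1 2 1 = 1)
    (h4 : B3 2 0 + B3 2 1 + B3 2 2 = 0) (h5 : B1 2 1 * B1 1 0 = 1 / 2)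
    (h6 : B3 2 0 * B3 0 0 + B3 2 1 * (B3 1 0 + B3 1 1) = -1 / 2)
    (h8 : A 2 0 * B3 0 0 + A 2 1 * (B3 1 0 + B3 1 1) = 0)
    (h9 : B1 2 0 * B3 0 0 + B1 2 1 * (B3 1 0 + B3 1 1) + B3 2 1 * B1 1 0 + B3 2 2 = 0)
    (h12 : B3 2 0 * A 0 0 + B3 2 1 * (A 1 0 + A 1 1) + B3 2 2 = 0)
    (h13 : 2 * B1 2 ⬝ᵥ ((B1 *ᵥ 1) * (B3 *ᵥ 1)) + B3 2 ⬝ᵥ ((B1 *ᵥ 1) * (B1 *ᵥ 1))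
      + B3 2 ⬝ᵥ ((B3 *ᵥ 1) * (B3 *ᵥ 1)) = 0)
    (h14 : B1 2 ⬝ᵥ (B1 *ᵥ B3 *ᵥ 1) + B1 2 ⬝ᵥ (B3 *ᵥ B1 *ᵥ 1)
      + B3 2 ⬝ᵥ (B1 *ᵥ B1 *ᵥ 1) + B3 2 ⬝ᵥ (B3 *ᵥ B3 *ᵥ 1) = 0) :
    SRKOrder1Conds A B1 0 B3 1 := by
  have hone : (![1, 1, 1] : Fin 3 → ℝ) = 1 := by ext i; fin_cases i <;> rfl
  unfold SRKOrder1Conds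
  simp only [dot3_eq_dotProduct, hone, zero_mulVec, mulVec_zero, Matrix.zero_apply,
    Pi.zero_apply, mul_zero, zero_mul, add_zero, zero_add, ← Pi.zero_def, zero_dotProduct,
    dotProduct_zero, ← Pi.mul_def]
  exact ⟨h1, h2, trivial, h4, h5, h6, by norm_num, h8, h9, trivial, trivial, h12, h13, h14⟩

/-- (Class I, λ = 1.) The Class I family of coefficients satisfies all strong
order-1.0 conditions (1)–(14) with λ = 1. -/
theorem srk_class_I (A11 A22 A33 B3_22f B3_32f : ℝ) (hb : B3_32f ≠ 0) :
    SRKOrder1Conds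
      !![A11, 0, 0;
         (A11 - 4*A22*B3_32f^2 + 4*B3_32f^2 - 1)/(4*B3_32f^2), A22, 0;
         1 - A33, 0, A33]
      !![0, 0, 0; 1, 0, 0; 1/2, 1/2, 0]
      (0 : Matrix (Fin 3) (Fin 3) ℝ)
      !![0, 0, 0;
         -(1 + 2*B3_22f*B3_32f)/(2*B3_32f), B3_22f, 0;
         -1/(4*B3_32f), B3_32f, -(4*B3_32f^2 - 1)/(4*B3_32f)]
      1 := by
  have hB1e : !![0, 0, 0; 1, 0, 0; 1/2, 1/2, 0] *ᵥ (1 : Fin 3 → ℝ) = ![0, 1, 1] := by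
    ext i; fin_cases i <;> simp [mulVec, dotProduct, Fin.sum_univ_three, ← two_mul]
  have hB3e : !![0, 0, 0;
      -(1 + 2*B3_22f*B3_32f)/(2*B3_32f), B3_22f, 0;
      -1/(4*B3_32f), B3_32f, -(4*B3_32f^2 - 1)/(4*B3_32f)] *ᵥ (1 : Fin 3 → ℝ)
      = ![0, -1 / (2 * B3_32f), 0] := by
    ext i; fin_cases i <;> simp [mulVec, dotProduct, Fin.sum_univ_three] <;> field_simp <;> ring
  apply srkOrder1Conds_of_B2_eq_zero
  case h13 | h14 =>
    rw [hB1e, hB3e]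
    simp [mulVec, dotProduct, Fin.sum_univ_three]
    field_simp
    ring
  all_goals simp <;> field_simp <;> ring
end

section
/- (Class II, λ=1.) For all real A_11, A_22, A_33, B3_22f, all real B3_32f ≠ 0, and each sign σ ∈ {+1,−1}, the 3-stage tableau with A_21 = A_11 − A_22, A_31 = 1 − A_33, A_32 = 0, B1_21 = σ/(2·B3_32f), B1_31 = 1 − σ·B3_32f, B1_32 = σ·B3_32f, B2 = 0, B3_11 = 0, B3_21 = −(1 + 2·B3_22f·B3_32f)/(2·B3_32f), B3_22 = B3_22f, B3_31 = −B3_32f, B3_32 = B3_32f, B3_33 = 0 satisfies all strong order-1.0 conditions (1)–(14) with λ = 1. -/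
open Matrix

/-!
With `B2 = 0` and `λ = 1`, conditions (3), (7), (10), (11) hold trivially and (13), (14) lose all
their `B2` terms. For the Class II tableau, with `b = B3_32` and `c = B3_22`, the row sums are
`B1 e = (0, σ/(2b), 1)` and `B3 e = (0, -1/(2b), 0)`; the reduced conditions (13) and (14) then
evaluate to `(1 - σ²)/(4b)` and `(σ² - 1) c / 2`, which vanish precisely because `σ² = 1`.
-/

lemma srkOrder1Conds_zero_one_of {A B1 B3 : Matrix (Fin 3) (Fin 3) ℝ}
    (h1 : A 2 0 + A 2 1 + A 2 2 = 1) (h2 : B1 2 0 + B1 2 1 = 1)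
    (h4 : B3 2 0 + B3 2 1 + B3 2 2 = 0) (h5 : B1 2 1 * B1 1 0 = 1 / 2)
    (h6 : B3 2 0 * B3 0 0 + B3 2 1 * (B3 1 0 + B3 1 1) = -1 / 2)
    (h8 : A 2 0 * B3 0 0 + A 2 1 * (B3 1 0 + B3 1 1) = 0)
    (h9 : B1 2 0 * B3 0 0 + B1 2 1 * (B3 1 0 + B3 1 1) + B3 2 1 * B1 1 0 + B3 2 2 = 0)
    (h12 : B3 2 0 * A 0 0 + B3 2 1 * (A 1 0 + A 1 1) + B3 2 2 = 0)
    (h13 : 2 * dot3 (B1 2) (B1 *ᵥ 1 * B3 *ᵥ 1) + dot3 (B3 2) (B1 *ᵥ 1 * B1 *ᵥ 1)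
      + dot3 (B3 2) (B3 *ᵥ 1 * B3 *ᵥ 1) = 0)
    (h14 : dot3 (B1 2) (B1 *ᵥ B3 *ᵥ 1) + dot3 (B1 2) (B3 *ᵥ B1 *ᵥ 1)
      + dot3 (B3 2) (B1 *ᵥ B1 *ᵥ 1) + dot3 (B3 2) (B3 *ᵥ B3 *ᵥ 1) = 0) :
    SRKOrder1Conds A B1 0 B3 1 := by
  have he : (![1, 1, 1] : Fin 3 → ℝ) = 1 := by ext i; fin_cases i <;> rfl
  refine ⟨h1, h2, by simp, h4, h5, h6, by simp, h8, h9, by simp, by simp, h12, ?_, ?_⟩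
  · simpa [dot3, he] using h13
  · simpa [dot3, he] using h14

def classIIA (a11 a22 a33 : ℝ) : Matrix (Fin 3) (Fin 3) ℝ :=
  !![a11, 0, 0;
     a11 - a22, a22, 0;
     1 - a33, 0, a33]

noncomputable def classIIB1 (σ b : ℝ) : Matrix (Fin 3) (Fin 3) ℝ :=
  !![0, 0, 0;
     σ/(2*b), 0, 0;
     1 - σ*b, σ*b, 0]

noncomputable def classIIB3 (c b : ℝ) : Matrix (Fin 3) (Fin 3) ℝ :=
  !![0, 0, 0;
     -(1 + 2*c*b)/(2*b), c, 0;
     -b, b, 0]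

lemma classIIB1_mulVec_one (σ b : ℝ) : classIIB1 σ b *ᵥ 1 = ![0, σ / (2 * b), 1] := by
  ext i
  fin_cases i <;> simp [classIIB1, mulVec, dotProduct, Fin.sum_univ_three]

lemma classIIB3_one_zero_add_one_one (c : ℝ) {b : ℝ} (hb : b ≠ 0) :
    classIIB3 c b 1 0 + classIIB3 c b 1 1 = -1 / (2 * b) := by
  change -(1 + 2 * c * b) / (2 * b) + c = _
  field_simp
  ring

lemma classIIB3_mulVec_one (c : ℝ) {b : ℝ} (hb : b ≠ 0) :
    classIIB3 c b *ᵥ 1 = ![0, -1 / (2 * b), 0] := by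
  rw [← classIIB3_one_zero_add_one_one c hb]
  ext i
  fin_cases i <;> simp [classIIB3, mulVec, dotProduct, Fin.sum_univ_three]

lemma classII_cond13_eq (σ c : ℝ) {b : ℝ} (hb : b ≠ 0) :
    2 * dot3 (classIIB1 σ b 2) (classIIB1 σ b *ᵥ 1 * classIIB3 c b *ᵥ 1)
      + dot3 (classIIB3 c b 2) (classIIB1 σ b *ᵥ 1 * classIIB1 σ b *ᵥ 1)
      + dot3 (classIIB3 c b 2) (classIIB3 c b *ᵥ 1 * classIIB3 c b *ᵥ 1)
      = (1 - σ ^ 2) / (4 * b) := by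
  rw [classIIB1_mulVec_one, classIIB3_mulVec_one c hb]
  simp only [dot3, classIIB1, classIIB3, Pi.mul_apply, of_apply, cons_val', cons_val_zero,
    cons_val_one, cons_val, cons_val_fin_one, Fin.sum_univ_three]
  field_simp
  ring

lemma classII_cond14_eq (σ c : ℝ) {b : ℝ} (hb : b ≠ 0) :
    dot3 (classIIB1 σ b 2) (classIIB1 σ b *ᵥ classIIB3 c b *ᵥ 1)
      + dot3 (classIIB1 σ b 2) (classIIB3 c b *ᵥ classIIB1 σ b *ᵥ 1)
      + dot3 (classIIB3 c b 2) (classIIB1 σ b *ᵥ classIIB1 σ b *ᵥ 1)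
      + dot3 (classIIB3 c b 2) (classIIB3 c b *ᵥ classIIB3 c b *ᵥ 1)
      = (σ ^ 2 - 1) * c / 2 := by
  rw [classIIB1_mulVec_one, classIIB3_mulVec_one c hb]
  simp only [dot3, classIIB1, classIIB3, mulVec, dotProduct, of_apply, cons_val', cons_val_zero,
    cons_val_one, cons_val, cons_val_fin_one, Fin.sum_univ_three]
  field_simp
  ring

lemma srkOrder1Conds_classII (a11 a22 a33 c : ℝ) {σ b : ℝ} (hb : b ≠ 0) (hσ : σ ^ 2 = 1) :
    SRKOrder1Conds (classIIA a11 a22 a33) (classIIB1 σ b) 0 (classIIB3 c b) 1 := by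
  apply srkOrder1Conds_zero_one_of
  case h5 =>
    show σ * b * (σ / (2 * b)) = 1 / 2
    field_simp
    exact hσ
  case h6 =>
    rw [classIIB3_one_zero_add_one_one c hb]
    show -b * 0 + b * (-1 / (2 * b)) = -1 / 2
    field_simp
    ring
  case h9 =>
    rw [classIIB3_one_zero_add_one_one c hb]
    show (1 - σ * b) * 0 + σ * b * (-1 / (2 * b)) + b * (σ / (2 * b)) + 0 = 0
    field_simp
    ring
  case h13 => rw [classII_cond13_eq σ c hb, hσ, sub_self, zero_div]
  case h14 => rw [classII_cond14_eq σ c hb, hσ, sub_self, zero_mul, zero_div]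
  all_goals simp [classIIA, classIIB1, classIIB3]

/-- (Class II, λ = 1.) The Class II family of coefficients, with sign σ ∈ {+1, −1},
satisfies all strong order-1.0 conditions (1)–(14) with λ = 1. -/
theorem srk_class_II (A11 A22 A33 B3_22f B3_32f σ : ℝ) (hb : B3_32f ≠ 0)
    (hσ : σ = 1 ∨ σ = -1) :
    SRKOrder1Conds
      !![A11, 0, 0;
         A11 - A22, A22, 0;
         1 - A33, 0, A33]
      !![0, 0, 0;
         σ/(2*B3_32f), 0, 0;
         1 - σ*B3_32f, σ*B3_32f, 0]
      (0 : Matrix (Fin 3) (Fin 3) ℝ)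
      !![0, 0, 0;
         -(1 + 2*B3_22f*B3_32f)/(2*B3_32f), B3_22f, 0;
         -B3_32f, B3_32f, 0]
      1 :=
  srkOrder1Conds_classII A11 A22 A33 B3_22f hb (by rcases hσ with rfl | rfl <;> norm_num)
end

section
/- (Class III, λ=1.) For all real A_21, A_22, A_32 and all real B3_11f ≠ 0, writing c = B3_11f, the 3-stage tableau with A_11 = 1, A_31 = −A_32·(c² − 1)/(2c²), A_33 = −(A_32·c² − 2c² + A_32)/(2c²), B1_21 = (c² + 1)/(2·(1 + 2c²)), B1_31 = −c²/(c² + 1), B1_32 = (1 + 2c²)/(c² + 1), B2 = 0, B3_11 = c, B3_21 = (c² − 1)/(2c), B3_22 = 0, B3_31 = −1/(2c), B3_32 = 0, B3_33 = 1/(2c) satisfies all strong order-1.0 conditions (1)–(14) with λ = 1. -/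
/-!
When B2 = 0, conditions (3), (10) and (11) hold trivially, (7) forces λ = 1, and all remaining
conditions, including the vector conditions (13) and (14), become polynomial identities in the
nonzero entries of A, B1 and B3. For the Class III family these are rational identities in
c = B3_11 whose only denominators are c, c² + 1 and 1 + 2c², none of which vanishes.
-/

open Matrix

theorem srkOrder1Conds_of_B2_eq_zero_s6
    {a11 a21 a22 a31 a32 a33 b21 b31 b32 d11 d21 d22 d31 d32 d33 : ℝ}
    (h1 : a31 + a32 + a33 = 1) (h2 : b31 + b32 = 1) (h4 : d31 + d32 + d33 = 0)
    (h5 : b32 * b21 = 1 / 2) (h6 : d31 * d11 + d32 * (d21 + d22) = -1 / 2)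
    (h8 : a31 * d11 + a32 * (d21 + d22) = 0)
    (h9 : b31 * d11 + b32 * (d21 + d22) + d32 * b21 + d33 = 0)
    (h12 : d31 * a11 + d32 * (a21 + a22) + d33 = 0)
    (h13 : 2 * b32 * b21 * (d21 + d22) + d32 * b21 ^ 2 + d33 * (b31 + b32) ^ 2
      + d31 * d11 ^ 2 + d32 * (d21 + d22) ^ 2 + d33 * (d31 + d32 + d33) ^ 2 = 0)
    (h14 : b32 * b21 * (d11 + d22) + d33 * b32 * b21 + d31 * d11 ^ 2
      + d32 * (d21 * d11 + d22 * (d21 + d22))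
      + d33 * (d31 * d11 + d32 * (d21 + d22) + d33 * (d31 + d32 + d33)) = 0) :
    SRKOrder1Conds !![a11, 0, 0; a21, a22, 0; a31, a32, a33]
      !![0, 0, 0; b21, 0, 0; b31, b32, 0] 0
      !![d11, 0, 0; d21, d22, 0; d31, d32, d33] 1 := by
  simp only [SRKOrder1Conds, dot3, mulVec, dotProduct, Fin.sum_univ_three, of_apply, cons_val',
    cons_val_zero, cons_val_one, cons_val, cons_val_fin_one, Matrix.zero_apply, add_zero, zero_add,
    zero_mul, mul_zero, mul_one, sub_self, true_and]
  refine ⟨h1, h2, h4, h5, h6, h8, h9, h12, ?_, ?_⟩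
  · linear_combination h13
  · linear_combination h14

/-- (Class III, λ = 1.) The Class III family of coefficients, with
c = B3_11f ≠ 0, satisfies all strong order-1.0 conditions (1)–(14) with λ = 1. -/
theorem srk_class_III (A21 A22 A32 B3_11f : ℝ) (hc : B3_11f ≠ 0) :
    SRKOrder1Conds
      !![1, 0, 0;
         A21, A22, 0;
         -A32*(B3_11f^2 - 1)/(2*B3_11f^2), A32,
           -(A32*B3_11f^2 - 2*B3_11f^2 + A32)/(2*B3_11f^2)]
      !![0, 0, 0;
         (B3_11f^2 + 1)/(2*(1 + 2*B3_11f^2)), 0, 0;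
         -B3_11f^2/(B3_11f^2 + 1), (1 + 2*B3_11f^2)/(B3_11f^2 + 1), 0]
      (0 : Matrix (Fin 3) (Fin 3) ℝ)
      !![B3_11f, 0, 0;
         (B3_11f^2 - 1)/(2*B3_11f), 0, 0;
         -1/(2*B3_11f), 0, 1/(2*B3_11f)]
      1 := by
  have hc₁ : B3_11f ^ 2 + 1 ≠ 0 := by positivity
  have hc₂ : 1 + 2 * B3_11f ^ 2 ≠ 0 := by positivity
  apply srkOrder1Conds_of_B2_eq_zero_s6 <;> field_simp <;> ring
end

section
/- (Class IV, λ=1.) For all real A_11, A_22, A_32, all real B3_33f ≠ 0, and each sign σ ∈ {+1,−1}, writing c = B3_33f and s = √(1 + 2c²), the 3-stage tableau with A_21 = (2c² − 2·A_22·c² + 2 − A_22 − A_11)/(1 + 2c²), A_31 = A_32/c², A_33 = (c² − c²·A_32 − A_32)/c², B1_21 = σ·(1 + c²)/(c·s), B1_31 = −(1/2)·(σ·c·s − 2 − 2c²)/(1 + c²), B1_32 = σ·(1/2)·c·s/(1 + c²), B2 = 0, B3_11 = −c, B3_21 = 1/c, B3_22 = 0, B3_31 = −(1/2)·c/(1 +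 c²), B3_32 = −(1/2)·c·(1 + 2c²)/(1 + c²), B3_33 = c satisfies all strong order-1.0 conditions (1)–(14) with λ = 1. -/
open Matrix

/-! When `B2 = 0`, conditions (3), (7), (10), (11) are trivial for `λ = 1`, and modulo (2) and
(4)–(6) the quadratic conditions (13), (14) collapse to two short scalar identities in the entries
of `B1` and `B3`. For the Class IV coefficients every remaining condition is a rational identity
in `c`, `σ` and `s = √(1 + 2c²)` that follows from `σ² = 1` and `s² = 1 + 2c²`. -/

theorem SRKOrder1Conds.of_B2_eq_zero
    {a11 a21 a22 a31 a32 a33 b21 b31 b32 d11 d21 d22 d31 d32 d33 : ℝ}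
    (h1 : a31 + a32 + a33 = 1) (h2 : b31 + b32 = 1) (h4 : d31 + d32 + d33 = 0)
    (h5 : b32 * b21 = 1 / 2) (h6 : d31 * d11 + d32 * (d21 + d22) = -1 / 2)
    (h8 : a31 * d11 + a32 * (d21 + d22) = 0)
    (h9 : b31 * d11 + b32 * (d21 + d22) + d32 * b21 + d33 = 0)
    (h12 : d31 * a11 + d32 * (a21 + a22) + d33 = 0)
    (h13 : d21 + d22 + d33 + d32 * b21 ^ 2 + d31 * d11 ^ 2 + d32 * (d21 + d22) ^ 2 = 0)
    (h14 : d11 + d22 + 2 * (d31 * d11 ^ 2 + d32 * (d21 * d11 + d22 * (d21 + d22))) = 0) :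
    SRKOrder1Conds !![a11, 0, 0; a21, a22, 0; a31, a32, a33] !![0, 0, 0; b21, 0, 0; b31, b32, 0]
      0 !![d11, 0, 0; d21, d22, 0; d31, d32, d33] 1 := by
  simp only [SRKOrder1Conds, dot3, Matrix.mulVec, dotProduct, Fin.sum_univ_three,
    Matrix.of_apply, Matrix.cons_val', Matrix.cons_val_zero, Matrix.cons_val_one,
    Matrix.cons_val_two, Matrix.head_cons, Matrix.tail_cons, Matrix.empty_val',
    Matrix.cons_val_fin_one, Matrix.head_fin_const, Matrix.zero_apply]
  refine ⟨h1, h2, by ring, h4, h5, by linarith, by ring, h8, h9, by ring, by ring, h12, ?_, ?_⟩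
  · linear_combination h13 + 2 * (d21 + d22) * h5 + d33 * (b31 + b32 + 1) * h2
      + d33 * (d31 + d32 + d33) * h4
  · linear_combination h14 / 2 + (d11 + d22 + d33) * h5 + d33 * h6 + d33 ^ 2 * h4

/-- (Class IV, λ = 1.) The Class IV family of coefficients, with
c = B3_33f ≠ 0, s = √(1 + 2c²) and sign σ ∈ {+1, −1}, satisfies all strong
order-1.0 conditions (1)–(14) with λ = 1. -/
theorem srk_class_IV (A11 A22 A32 B3_33f σ : ℝ) (hc : B3_33f ≠ 0)
    (hσ : σ = 1 ∨ σ = -1) :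
    SRKOrder1Conds
      !![A11, 0, 0;
         (2*B3_33f^2 - 2*A22*B3_33f^2 + 2 - A22 - A11)/(1 + 2*B3_33f^2), A22, 0;
         A32/B3_33f^2, A32, (B3_33f^2 - B3_33f^2*A32 - A32)/B3_33f^2]
      !![0, 0, 0;
         σ*(1 + B3_33f^2)/(B3_33f * Real.sqrt (1 + 2*B3_33f^2)), 0, 0;
         -(1/2)*(σ*B3_33f*Real.sqrt (1 + 2*B3_33f^2) - 2 - 2*B3_33f^2)/(1 + B3_33f^2),
           σ*(1/2)*B3_33f*Real.sqrt (1 + 2*B3_33f^2)/(1 + B3_33f^2), 0]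
      (0 : Matrix (Fin 3) (Fin 3) ℝ)
      !![-B3_33f, 0, 0;
         1/B3_33f, 0, 0;
         -(1/2)*B3_33f/(1 + B3_33f^2), -(1/2)*B3_33f*(1 + 2*B3_33f^2)/(1 + B3_33f^2),
           B3_33f]
      1 := by
  set c := B3_33f
  set s := Real.sqrt (1 + 2 * c ^ 2)
  have hs : s ^ 2 = 1 + 2 * c ^ 2 := Real.sq_sqrt (by positivity)
  have hs0 : s ≠ 0 := (Real.sqrt_pos.mpr (by positivity)).ne'
  have hσ2 : σ ^ 2 = 1 := by rcases hσ with rfl | rfl <;> norm_num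
  have h1c : 1 + c ^ 2 ≠ 0 := by positivity
  apply SRKOrder1Conds.of_B2_eq_zero
  case h5 =>
    field_simp
    linear_combination hσ2
  case h9 =>
    field_simp
    linear_combination σ * (1 + c ^ 2) * hs
  case h13 =>
    field_simp
    linear_combination (1 + c ^ 2) ^ 2 * (hs - (1 + 2 * c ^ 2) * hσ2)
  all_goals field_simp; ring
end

section
/- (Class VII, λ=0.) For all real A_11, A_22, A_32, A_33, B3_22f, all real B1_21f with 0 < B1_21f < 1, and each sign σ ∈ {+1,−1}, writing q = √(2·B1_21f − 2·(B1_21f)²), the 3-stage tableau with A_21 = A_11 − A_11·B1_21f − A_22 + B1_21f, A_31 = 1 − A_32 − A_33, B1_21 = B1_21f, B1_31 = 1, B1_32 = 0, B2_21 = σ·q, B2_31 = 0, B2_32 = 0, B3_11 = 0, B3_21 = −B3_22f, B3_22 = B3_22f, B3_31 = −σ·(1 − B1_21f)/q, B3_32 = σ/q, B3_33 = −σ·B1_21f/q satisfies all strong order-1.0 conditions (1)–(14) with λ = 0. -/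
/-!
The matrices `B1` and `B2` vanish outside the first column below the diagonal, so each
product `Bi (Bj e)` vanishes, and every row of `B3` sums to zero, so `B3 e = 0`. Of (1)–(14)
only (7) and (13) then depend on the parameters: (7) reduces to `σ² = 1`, and (13) to
`σ / q · (b² − b + σ² q² / 2) = 0`, which is where `q² = 2b(1 − b)` enters.
-/

open Matrix

section ClassVII

variable (A11 A22 A32 A33 B3_22f b σ q : ℝ)

def classVIIA : Matrix (Fin 3) (Fin 3) ℝ :=
  !![A11, 0, 0;
     A11 - A11*b - A22 + b, A22, 0;
     1 - A32 - A33, A32, A33]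

def classVIIB1 : Matrix (Fin 3) (Fin 3) ℝ :=
  !![0, 0, 0;
     b, 0, 0;
     1, 0, 0]

def classVIIB2 : Matrix (Fin 3) (Fin 3) ℝ :=
  !![0, 0, 0;
     σ * q, 0, 0;
     0, 0, 0]

noncomputable def classVIIB3 : Matrix (Fin 3) (Fin 3) ℝ :=
  !![0, 0, 0;
     -B3_22f, B3_22f, 0;
     -σ*(1 - b)/q, σ/q, -σ*b/q]

theorem classVIIB1_mulVec_ones : classVIIB1 b *ᵥ ![1, 1, 1] = ![0, b, 1] := by
  ext i; fin_cases i <;> simp [classVIIB1, mulVec, dotProduct, Fin.sum_univ_three]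

theorem classVIIB2_mulVec_ones : classVIIB2 σ q *ᵥ ![1, 1, 1] = ![0, σ * q, 0] := by
  ext i; fin_cases i <;> simp [classVIIB2, mulVec, dotProduct, Fin.sum_univ_three]

theorem classVIIB3_mulVec_ones : classVIIB3 B3_22f b σ q *ᵥ ![1, 1, 1] = 0 := by
  ext i; fin_cases i <;> simp [classVIIB3, mulVec, dotProduct, Fin.sum_univ_three]
  ring

theorem srkOrder1Conds_classVII (hσ : σ ^ 2 = 1) (hq : q ≠ 0) (hq2 : q ^ 2 = 2*b - 2*b^2) :
    SRKOrder1Conds (classVIIA A11 A22 A32 A33 b) (classVIIB1 b) (classVIIB2 σ q)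
      (classVIIB3 B3_22f b σ q) 0 := by
  simp only [SRKOrder1Conds, classVIIB1_mulVec_ones, classVIIB2_mulVec_ones,
    classVIIB3_mulVec_ones]
  simp only [classVIIA, classVIIB1, classVIIB2, classVIIB3, dot3, mulVec, dotProduct,
    Fin.sum_univ_three, of_apply, cons_val', cons_val_fin_one, cons_val, Pi.zero_apply,
    Finset.sum_const_zero, neg_mul, zero_mul, zero_div, mul_zero, mul_one, neg_add_cancel,
    neg_zero, add_zero, zero_add, sub_zero, one_div, and_true, true_and]
  refine ⟨by ring, by ring, ?cond7, by ring, by ring, ?cond13⟩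
  case cond7 =>
    field_simp
    exact hσ
  case cond13 =>
    field_simp
    linear_combination σ * q ^ 2 * hσ + σ * hq2

end ClassVII

/-- (Class VII, λ = 0.) The Class VII family of coefficients, with
0 < B1_21f < 1, q = √(2·B1_21f − 2·B1_21f²) and sign σ ∈ {+1, −1}, satisfies
all strong order-1.0 conditions (1)–(14) with λ = 0. -/
theorem srk_class_VII (A11 A22 A32 A33 B3_22f B1_21f σ : ℝ)
    (h0 : 0 < B1_21f) (h1 : B1_21f < 1) (hσ : σ = 1 ∨ σ = -1) :
    SRKOrder1Conds
      !![A11, 0, 0;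
         A11 - A11*B1_21f - A22 + B1_21f, A22, 0;
         1 - A32 - A33, A32, A33]
      !![0, 0, 0;
         B1_21f, 0, 0;
         1, 0, 0]
      !![0, 0, 0;
         σ * Real.sqrt (2*B1_21f - 2*B1_21f^2), 0, 0;
         0, 0, 0]
      !![0, 0, 0;
         -B3_22f, B3_22f, 0;
         -σ*(1 - B1_21f)/Real.sqrt (2*B1_21f - 2*B1_21f^2),
           σ/Real.sqrt (2*B1_21f - 2*B1_21f^2),
           -σ*B1_21f/Real.sqrt (2*B1_21f - 2*B1_21f^2)]
      0 := by
  have hrad : 0 < 2*B1_21f - 2*B1_21f^2 := by nlinarith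
  exact srkOrder1Conds_classVII A11 A22 A32 A33 B3_22f B1_21f σ _
    (by rcases hσ with rfl | rfl <;> norm_num) (Real.sqrt_pos.mpr hrad).ne' (Real.sq_sqrt hrad.le)
end

section
/- (Class VIII, λ=0.) For all real A_11, A_21, A_22, A_32, B3_22f and all real B2_32f ≠ 0, B3_11f ≠ 0, the 3-stage tableau with A_31 = −A_32·(1 + B2_32f·B3_11f)/(B2_32f·B3_11f), A_33 = (B2_32f·B3_11f + A_32)/(B2_32f·B3_11f), B1_21 = 0, B1_31 = 1 + B2_32f·B3_11f, B1_32 = −B2_32f·B3_11f, B2_21 = 0, B2_31 = −B2_32f, B2_32 = B2_32f, B3_11 = B3_11f, B3_21 = (1 + B2_32f·(B3_11f − B3_22f))/B2_32f, B3_22 = B3_22f, B3_31 = B3_32 = B3_33 = 0 satisfies all strong order-1.0 conditions (1)–(14) with λ = 0. -/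
open Matrix

/-
For this sparsity pattern (B1, B2 nonzero only in the first two entries of their last rows,
B3 with vanishing last row) conditions (13) and (14) hold identically: B1 e, B2 e and the
images under B1, B2 are supported on the third stage, where β1, β2 and every third column
vanish, and β3 = 0. What remains of (1)–(12) is six equations, which the Class VIII formulas
solve: (3) and (7) give B3_21 + B3_22 = B3_11 + 1/B2_32, then (9) forces
B1_32 = -B2_32 B3_11, (8) fixes A_31 and (1) fixes A_33.
-/

theorem srkOrder1Conds_sparse_zero_iff
    (a₁₁ a₂₁ a₂₂ a₃₁ a₃₂ a₃₃ u₁ u₂ v₁ v₂ w₁₁ w₂₁ w₂₂ : ℝ) :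
    SRKOrder1Conds
        !![a₁₁, 0, 0; a₂₁, a₂₂, 0; a₃₁, a₃₂, a₃₃]
        !![0, 0, 0; 0, 0, 0; u₁, u₂, 0]
        !![0, 0, 0; 0, 0, 0; v₁, v₂, 0]
        !![w₁₁, 0, 0; w₂₁, w₂₂, 0; 0, 0, 0]
        0 ↔
      a₃₁ + a₃₂ + a₃₃ = 1 ∧ u₁ + u₂ = 1 ∧ v₁ + v₂ = 0 ∧
        v₁ * w₁₁ + v₂ * (w₂₁ + w₂₂) = 1 ∧ a₃₁ * w₁₁ + a₃₂ * (w₂₁ + w₂₂) = 0 ∧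
        u₁ * w₁₁ + u₂ * (w₂₁ + w₂₂) = 0 := by
  simp [SRKOrder1Conds, dot3, mulVec, dotProduct, Fin.sum_univ_three]

/-- (Class VIII, λ = 0.) The Class VIII family of coefficients, with
B2_32f ≠ 0 and B3_11f ≠ 0, satisfies all strong order-1.0 conditions (1)–(14)
with λ = 0. -/
theorem srk_class_VIII (A11 A21 A22 A32 B3_22f B2_32f B3_11f : ℝ)
    (hb2 : B2_32f ≠ 0) (hb3 : B3_11f ≠ 0) :
    SRKOrder1Conds
      !![A11, 0, 0;
         A21, A22, 0;
         -A32*(1 + B2_32f*B3_11f)/(B2_32f*B3_11f), A32,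
           (B2_32f*B3_11f + A32)/(B2_32f*B3_11f)]
      !![0, 0, 0;
         0, 0, 0;
         1 + B2_32f*B3_11f, -(B2_32f*B3_11f), 0]
      !![0, 0, 0;
         0, 0, 0;
         -B2_32f, B2_32f, 0]
      !![B3_11f, 0, 0;
         (1 + B2_32f*(B3_11f - B3_22f))/B2_32f, B3_22f, 0;
         0, 0, 0]
      0 := by
  refine (srkOrder1Conds_sparse_zero_iff ..).mpr ⟨?_, by ring, by ring, ?_, ?_, ?_⟩ <;>
    · field_simp
      ring
end

section
/- (Class IX, λ=0.) For all real A_11, A_22, A_32, B3_32f and all real B3_11f ≠ 0, writing c = B3_11f, the 3-stage tableau with A_21 = (c² − A_22·c² − A_11 + 1)/c², A_31 = A_32/c², A_33 = (c² − c²·A_32 − A_32)/c², B1_21 = 0, B1_31 = (c + c²·B3_32f + B3_32f)/(c·(c² + 1)), B1_32 = (c³ − c²·B3_32f − B3_32f)/(c·(c² + 1)), B2_21 = 0, B2_31 = c/(c² + 1), B2_32 = −c/(c² + 1), B3_11 = c, B3_21 = −1/c, B3_22 = 0, B3_31 = B3_32f/c², B3_32 = B3_32f, B3_33 = −(c² +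 1)·B3_32f/c² satisfies all strong order-1.0 conditions (1)–(14) with λ = 0. -/
open Matrix

def IsStrictlyLowerLastRow (B : Matrix (Fin 3) (Fin 3) ℝ) : Prop :=
  B 0 = 0 ∧ B 1 = 0 ∧ B 2 2 = 0

/- With `B1 e` and `B2 e` supported on the last stage, every term of (13) and (14) involving
`B1` or `B2` collapses, leaving only `B3 2 2 + β3 · (B3 e ∘ B3 e)` and `β3 · B3 (B3 e)`,
which `h13` and `h14` expand for lower triangular `B3`. -/
theorem srkOrder1Conds_zero_of_isStrictlyLowerLastRow
    {A B1 B2 B3 : Matrix (Fin 3) (Fin 3) ℝ}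
    (hB1 : IsStrictlyLowerLastRow B1) (hB2 : IsStrictlyLowerLastRow B2)
    (hB3 : B3.BlockTriangular OrderDual.toDual)
    (h1 : A 2 0 + A 2 1 + A 2 2 = 1)
    (h2 : B1 2 0 + B1 2 1 = 1)
    (h3 : B2 2 0 + B2 2 1 = 0)
    (h4 : B3 2 0 + B3 2 1 + B3 2 2 = 0)
    (h6 : B3 2 0 * B3 0 0 + B3 2 1 * (B3 1 0 + B3 1 1) = 0)
    (h7 : B2 2 0 * B3 0 0 + B2 2 1 * (B3 1 0 + B3 1 1) = 1)
    (h8 : A 2 0 * B3 0 0 + A 2 1 * (B3 1 0 + B3 1 1) = 0)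
    (h9 : B1 2 0 * B3 0 0 + B1 2 1 * (B3 1 0 + B3 1 1) + B3 2 2 = 0)
    (h12 : B3 2 0 * A 0 0 + B3 2 1 * (A 1 0 + A 1 1) + B3 2 2 = 0)
    (h13 : B3 2 2 + B3 2 0 * B3 0 0 ^ 2 + B3 2 1 * (B3 1 0 + B3 1 1) ^ 2 = 0)
    (h14 : B3 2 0 * B3 0 0 ^ 2 + B3 2 1 * (B3 1 0 * B3 0 0 + B3 1 1 * (B3 1 0 + B3 1 1)) = 0) :
    SRKOrder1Conds A B1 B2 B3 0 := by
  obtain ⟨hB1₀, hB1₁, hB1₂₂⟩ := hB1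
  obtain ⟨hB2₀, hB2₁, hB2₂₂⟩ := hB2
  have hB3₀₁ : B3 0 1 = 0 := hB3 (by decide)
  have hB3₀₂ : B3 0 2 = 0 := hB3 (by decide)
  have hB3₁₂ : B3 1 2 = 0 := hB3 (by decide)
  unfold SRKOrder1Conds dot3
  simp only [mulVec, dotProduct, Fin.sum_univ_three, hB1₀, hB1₁, hB1₂₂, hB2₀, hB2₁, hB2₂₂,
    hB3₀₁, hB3₀₂, hB3₁₂, Pi.zero_apply, cons_val_zero, cons_val_one, cons_val_two, head_cons,
    tail_cons, mul_one, mul_zero, zero_mul, add_zero, zero_add]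
  refine ⟨h1, h2, h3, h4, by simp, by simpa using h6, by simpa using h7, h8, by simpa using h9,
    by simp, by simp, h12, ?_, ?_⟩
  · linear_combination h13 + B3 2 2 * (B1 2 0 + B1 2 1 + 1) * h2
      + B3 2 2 / 2 * (B2 2 0 + B2 2 1) * h3 + B3 2 2 * (B3 2 0 + B3 2 1 + B3 2 2) * h4
  · linear_combination h14 + B3 2 2 * h6 + B3 2 2 ^ 2 * h4

/-- (Class IX, λ = 0.) The Class IX family of coefficients, with
c = B3_11f ≠ 0, satisfies all strong order-1.0 conditions (1)–(14) with λ = 0. -/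
theorem srk_class_IX (A11 A22 A32 B3_32f B3_11f : ℝ) (hc : B3_11f ≠ 0) :
    SRKOrder1Conds
      !![A11, 0, 0;
         (B3_11f^2 - A22*B3_11f^2 - A11 + 1)/B3_11f^2, A22, 0;
         A32/B3_11f^2, A32, (B3_11f^2 - B3_11f^2*A32 - A32)/B3_11f^2]
      !![0, 0, 0;
         0, 0, 0;
         (B3_11f + B3_11f^2*B3_32f + B3_32f)/(B3_11f*(B3_11f^2 + 1)),
           (B3_11f^3 - B3_11f^2*B3_32f - B3_32f)/(B3_11f*(B3_11f^2 + 1)), 0]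
      !![0, 0, 0;
         0, 0, 0;
         B3_11f/(B3_11f^2 + 1), -(B3_11f/(B3_11f^2 + 1)), 0]
      !![B3_11f, 0, 0;
         -(1/B3_11f), 0, 0;
         B3_32f/B3_11f^2, B3_32f, -((B3_11f^2 + 1)*B3_32f/B3_11f^2)]
      0 := by

  apply srkOrder1Conds_zero_of_isStrictlyLowerLastRow
  · exact ⟨by ext j; fin_cases j <;> rfl, by ext j; fin_cases j <;> rfl, rfl⟩
  · exact ⟨by ext j; fin_cases j <;> rfl, by ext j; fin_cases j <;> rfl, rfl⟩
  · intro i j hij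
    fin_cases i <;> fin_cases j <;> first | rfl | exact absurd hij (by decide)
  all_goals
    simp only [of_apply, cons_val_zero, cons_val_one, cons_val_two, head_cons, tail_cons]
    field_simp
    ring
end

section
/- (Class X, λ=0.) For all real A_11, A_21, A_22, A_33, B3_22f and all real B2_32f ≠ 0, the 3-stage tableau with A_31 = 1 − A_33, A_32 = 0, B1_21 = 0, B1_31 = 1, B1_32 = 0, B2_21 = 0, B2_31 = −B2_32f, B2_32 = B2_32f, B3_11 = 0, B3_21 = (1 − B2_32f·B3_22f)/B2_32f, B3_22 = B3_22f, B3_31 = B3_32 = B3_33 = 0 satisfies all strong order-1.0 conditions (1)–(14) with λ = 0. -/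
open Matrix

/-!
With `b = B2_32f` and unit vectors `e₂`, `e₃`, the stage sums of the tableau are `B1 e = e₃`,
`B2 e = 0` and `B3 e = b⁻¹ e₂`. Every term of the tree conditions (13) and (14) then contains
a factor `B2 e`, the vanishing last row `β3` of `B3`, the product of the disjointly supported
`B1 e` and `B3 e`, or an entry on or above the diagonal of the strictly lower triangular `B1`,
`B2` (or above the diagonal of `B3`), so it is zero. Of the scalar conditions only (7) involves
more than reading off entries.
-/

noncomputable section

namespace ClassX

variable (A11 A21 A22 A33 c b : ℝ)

def A : Matrix (Fin 3) (Fin 3) ℝ := !![A11, 0, 0; A21, A22, 0; 1 - A33, 0, A33]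

def B1 : Matrix (Fin 3) (Fin 3) ℝ := !![0, 0, 0; 0, 0, 0; 1, 0, 0]

def B2 : Matrix (Fin 3) (Fin 3) ℝ := !![0, 0, 0; 0, 0, 0; -b, b, 0]

def B3 : Matrix (Fin 3) (Fin 3) ℝ := !![0, 0, 0; (1 - b * c) / b, c, 0; 0, 0, 0]

variable {b}

/-- `B3_21` is chosen so that condition (7), `B2_32 (B3_21 + B3_22) = 1 - λ`, holds with `λ = 0`. -/
theorem B3_one_zero_add_B3_one_one (hb : b ≠ 0) : B3 c b 1 0 + B3 c b 1 1 = b⁻¹ := by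
  simp only [B3, of_apply, cons_val', cons_val_zero, cons_val_one, empty_val', cons_val_fin_one]
  field_simp
  ring

theorem B1_mulVec_one : B1 *ᵥ ![1, 1, 1] = ![0, 0, 1] := by
  ext i
  fin_cases i <;> simp [B1, mulVec, dotProduct, Fin.sum_univ_three]

theorem B2_mulVec_one : B2 b *ᵥ ![1, 1, 1] = 0 := by
  ext i
  fin_cases i <;> simp [B2, mulVec, dotProduct, Fin.sum_univ_three]

theorem B3_mulVec_one (hb : b ≠ 0) : B3 c b *ᵥ ![1, 1, 1] = ![0, b⁻¹, 0] := by
  ext i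
  fin_cases i
  · simp [B3, mulVec, dotProduct, Fin.sum_univ_three]
  · rw [← B3_one_zero_add_B3_one_one c hb]
    simp [B3, mulVec, dotProduct, Fin.sum_univ_three]
  · simp [B3, mulVec, dotProduct, Fin.sum_univ_three]

end ClassX

end

/-- (Class X, λ = 0.) The Class X family of coefficients, with B2_32f ≠ 0,
satisfies all strong order-1.0 conditions (1)–(14) with λ = 0. -/
theorem srk_class_X (A11 A21 A22 A33 B3_22f B2_32f : ℝ) (hb : B2_32f ≠ 0) :
    SRKOrder1Conds
      !![A11, 0, 0;
         A21, A22, 0;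
         1 - A33, 0, A33]
      !![0, 0, 0;
         0, 0, 0;
         1, 0, 0]
      !![0, 0, 0;
         0, 0, 0;
         -B2_32f, B2_32f, 0]
      !![0, 0, 0;
         (1 - B2_32f*B3_22f)/B2_32f, B3_22f, 0;
         0, 0, 0]
      0 := by
  change SRKOrder1Conds (ClassX.A A11 A21 A22 A33) ClassX.B1 (ClassX.B2 B2_32f)
    (ClassX.B3 B3_22f B2_32f) 0
  unfold SRKOrder1Conds
  simp only [ClassX.B1_mulVec_one, ClassX.B2_mulVec_one, ClassX.B3_mulVec_one _ hb,
    ClassX.B3_one_zero_add_B3_one_one _ hb]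
  simp [dot3, Fin.sum_univ_three, mulVec, dotProduct, hb, ClassX.A, ClassX.B1, ClassX.B2,
    ClassX.B3]
end

section
/- (Class XI, λ=0.) For all real A_21, A_22, A_33 and all real B3_33f with B3_33f ≠ 0 and 2·(B3_33f)² ≠ 1, writing c = B3_33f and b32 = −(2c⁴ + 1)/(2c·(c² + 1)), the radicand −2c³·b32 − 2·b32·c − 2c⁴ equals 1 (in particular it is nonnegative), and the 3-stage tableau with A_11 = (2·A_21·c⁴ + A_21 + 2·A_22·c⁴ + A_22 − 2c⁴ − 2c²)/(1 − 2c²), A_32 = −(2·A_33·c⁴ − 2c⁴ − 1 + A_33)/(2c²·(c² + 1)), A_31 = 1 − A_32 − A_33, B1_21 = 0, B1_31 = 1, B1_32 = 0, B2_21 = √(−2c³·b32 − 2·b32·c − 2c⁴)/b32, B2_31 = 0, B2_32 = 0, B3_11 = −c, B3_21 = −(b32·c + c²)/b32, B3_22 = 0, B3_31 = −b32 − c, B3_32 = b32, B3_33 = c satisfies all strong order-1.0 conditions (1)–(14) with λ = 0. -/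
open Matrix

/-!
In Class XI only `b = B3_32`, `c = B3_33` and `d = B2_21` are free: the first column of `A` and
`A_32` are then fixed by the linear conditions (12) and (8), condition (7) forces `d = 1 / b`,
and condition (13) becomes `2bc(c² + 1) + 2c⁴ + 1 = 0`. The prescribed `b32` solves this
relation, which is the radicand being `1` rearranged; and `b32 + c = (2c² - 1) / (2c(c² + 1))`
explains the denominator of `A_11`.
-/

lemma srkOrder1Conds_classXI {a11 a21 a22 a32 a33 b c d : ℝ} (hb : b ≠ 0) (hd : d = 1 / b)
    (hrel : 2 * b * c * (c ^ 2 + 1) = -(2 * c ^ 4 + 1))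
    (ha32 : a32 * c = -((1 - a33) * b)) (ha11 : (b + c) * a11 = b * (a21 + a22) + c) :
    SRKOrder1Conds
      !![a11, 0, 0; a21, a22, 0; 1 - a32 - a33, a32, a33]
      !![0, 0, 0; 0, 0, 0; 1, 0, 0]
      !![0, 0, 0; d, 0, 0; 0, 0, 0]
      !![-c, 0, 0; -(b * c + c ^ 2) / b, 0, 0; -b - c, b, c] 0 := by
  subst hd
  simp only [SRKOrder1Conds, dot3, Matrix.mulVec, dotProduct, Fin.sum_univ_three,
    Matrix.of_apply, Matrix.cons_val', Matrix.cons_val_zero, Matrix.cons_val_one,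
    Matrix.cons_val_two, Matrix.head_cons, Matrix.tail_cons, Matrix.empty_val',
    Matrix.cons_val_fin_one, Matrix.head_fin_const]
  refine ⟨by ring, by norm_num, by norm_num, by ring, by norm_num, ?_, ?_, ?_, by norm_num,
    by norm_num, by norm_num, ?_, ?_, ?_⟩
  · field_simp; ring
  · field_simp; ring
  · field_simp; linear_combination -c * ha32
  · linear_combination -ha11
  · field_simp; linear_combination b * hrel
  · field_simp; ring

/-- (Class XI, λ = 0.) For c = B3_33f with c ≠ 0 and 2c² ≠ 1, and
b32 = −(2c⁴ + 1)/(2c·(c² + 1)), the radicand −2c³·b32 − 2·b32·c − 2c⁴ equals 1,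
and the Class XI family of coefficients satisfies all strong order-1.0
conditions (1)–(14) with λ = 0. -/
theorem srk_class_XI (A21 A22 A33 B3_33f : ℝ) (hc : B3_33f ≠ 0)
    (hc2 : 2*B3_33f^2 ≠ 1) :
    -2*B3_33f^3 * (-(2*B3_33f^4 + 1)/(2*B3_33f*(B3_33f^2 + 1)))
      - 2*(-(2*B3_33f^4 + 1)/(2*B3_33f*(B3_33f^2 + 1)))*B3_33f
      - 2*B3_33f^4 = 1 ∧
    SRKOrder1Conds
      !![(2*A21*B3_33f^4 + A21 + 2*A22*B3_33f^4 + A22 - 2*B3_33f^4 - 2*B3_33f^2)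
           /(1 - 2*B3_33f^2), 0, 0;
         A21, A22, 0;
         1 - (-(2*A33*B3_33f^4 - 2*B3_33f^4 - 1 + A33)/(2*B3_33f^2*(B3_33f^2 + 1)))
           - A33,
           -(2*A33*B3_33f^4 - 2*B3_33f^4 - 1 + A33)/(2*B3_33f^2*(B3_33f^2 + 1)),
           A33]
      !![0, 0, 0;
         0, 0, 0;
         1, 0, 0]
      !![0, 0, 0;
         Real.sqrt (-2*B3_33f^3 * (-(2*B3_33f^4 + 1)/(2*B3_33f*(B3_33f^2 + 1)))
             - 2*(-(2*B3_33f^4 + 1)/(2*B3_33f*(B3_33f^2 + 1)))*B3_33f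
             - 2*B3_33f^4)
           / (-(2*B3_33f^4 + 1)/(2*B3_33f*(B3_33f^2 + 1))), 0, 0;
         0, 0, 0]
      !![-B3_33f, 0, 0;
         -((-(2*B3_33f^4 + 1)/(2*B3_33f*(B3_33f^2 + 1)))*B3_33f + B3_33f^2)
           / (-(2*B3_33f^4 + 1)/(2*B3_33f*(B3_33f^2 + 1))), 0, 0;
         -(-(2*B3_33f^4 + 1)/(2*B3_33f*(B3_33f^2 + 1))) - B3_33f,
           -(2*B3_33f^4 + 1)/(2*B3_33f*(B3_33f^2 + 1)), B3_33f]
      0 := by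
  set c := B3_33f
  generalize hb_def : -(2 * c ^ 4 + 1) / (2 * c * (c ^ 2 + 1)) = b
  have hrel : 2 * b * c * (c ^ 2 + 1) = -(2 * c ^ 4 + 1) := by
    rw [← hb_def]; field_simp
  have hrad : -2 * c ^ 3 * b - 2 * b * c - 2 * c ^ 4 = 1 := by linear_combination -hrel
  have hb : b ≠ 0 := by
    rintro rfl
    nlinarith [pow_two_nonneg (c ^ 2)]
  have h2c : 1 - 2 * c ^ 2 ≠ 0 := fun h => hc2 (by linarith)
  refine ⟨hrad, srkOrder1Conds_classXI hb ?_ hrel ?_ ?_⟩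
  · rw [hrad, Real.sqrt_one]
  · field_simp
    linear_combination (1 - A33) * hrel
  · rw [mul_div_assoc', div_eq_iff h2c]
    linear_combination (A21 + A22 - 1) * c * hrel
end

section
/- Let a1 ∈ ℝ and define, for ĥ, k ∈ ℂ with (1 − ĥ) ≠ 0 and (1 − a1·ĥ) ≠ 0, R̂(ĥ,k) = (|1 − a1·ĥ|² + |k|²)/(|1 − ĥ|²·|1 − a1·ĥ|²). Then the following are equivalent: (i) a1 ≥ 0; (ii) for all ĥ, k ∈ ℂ with 2·Re(ĥ) + |k|² < 0 and 1 − a1·ĥ ≠ 0, one has R̂(ĥ,k) < 1. (This is the A-stability characterization of the order 0.5 SRK scheme with coefficients a2 = 0; note 2·Re(ĥ) + |k|² < 0 forces Re(ĥ) < 0, so 1 − ĥ ≠ 0 automatically.) -/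
/-!
For `a1 ≥ 0` and `Re ĥ < 0` the factor `|1 - a1 ĥ|²` is at least `1`, while the domain condition
gives `|1 - ĥ|² ≥ 1 - 2 Re ĥ > 1 + |k|²`; together these force `R̂ < 1`.
For `a1 < 0` the factor `1 - a1 ĥ` vanishes at the negative real point `ĥ = 1 / a1`. At a real
`ĥ = -c` where `t = 1 + a1 c` is small enough that `t² (2 + c) < 2`, the choice
`|k|² = t² (|1 - ĥ|² - 1)` still satisfies `2 Re ĥ + |k|² = c (t² (2 + c) - 2) < 0` and makes
`R̂ = 1` exactly.
-/

open Complex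

noncomputable def stabilityFunction (a1 : ℝ) (h k : ℂ) : ℝ :=
  (‖1 - (a1 : ℂ) * h‖ ^ 2 + ‖k‖ ^ 2) / (‖1 - h‖ ^ 2 * ‖1 - (a1 : ℂ) * h‖ ^ 2)

lemma one_le_sq_norm_one_sub_ofReal_mul {a : ℝ} {h : ℂ} (ha : 0 ≤ a) (hh : h.re ≤ 0) :
    1 ≤ ‖1 - (a : ℂ) * h‖ ^ 2 := by
  have hah : a * h.re ≤ 0 := mul_nonpos_of_nonneg_of_nonpos ha hh
  rw [Complex.sq_norm, normSq_apply]
  simp only [sub_re, one_re, mul_re, ofReal_re, ofReal_im, zero_mul, sub_zero, sub_im, one_im,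
    mul_im, add_zero, zero_sub, neg_mul_neg]
  nlinarith [mul_self_nonneg (a * h.im)]

lemma one_add_lt_sq_norm_one_sub {h : ℂ} {K : ℝ} (hK : 2 * h.re + K < 0) :
    1 + K < ‖1 - h‖ ^ 2 := by
  rw [Complex.sq_norm, normSq_apply]
  simp only [sub_re, one_re, sub_im, one_im, zero_sub, neg_mul_neg]
  nlinarith [mul_self_nonneg h.re, mul_self_nonneg h.im]

lemma add_div_mul_lt_one {A H K : ℝ} (hA : 1 ≤ A) (hK : 0 ≤ K) (hH : 1 + K < H) :
    (A + K) / (H * A) < 1 := by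
  rw [div_lt_one (by nlinarith)]
  nlinarith

theorem stabilityFunction_lt_one {a1 : ℝ} {h k : ℂ} (ha : 0 ≤ a1)
    (hdom : 2 * h.re + ‖k‖ ^ 2 < 0) : stabilityFunction a1 h k < 1 := by
  have hre : h.re ≤ 0 := by nlinarith [sq_nonneg ‖k‖]
  exact add_div_mul_lt_one (one_le_sq_norm_one_sub_ofReal_mul ha hre) (sq_nonneg _)
    (one_add_lt_sq_norm_one_sub hdom)

/-- `c = 1 / (a1 (a1 - 1))` puts `1 + a1 c = a1 / (a1 - 1)` strictly between `0` and `1`. -/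
lemma exists_sq_one_add_mul_mul_lt_two {a1 : ℝ} (ha : a1 < 0) :
    ∃ c : ℝ, 0 < c ∧ 1 + a1 * c ≠ 0 ∧ (1 + a1 * c) ^ 2 * (2 + c) < 2 := by
  have hd : a1 - 1 < 0 := by linarith
  have ht : 1 + a1 * (1 / (a1 * (a1 - 1))) = a1 / (a1 - 1) := by
    field_simp [ha.ne, hd.ne]
    ring
  refine ⟨1 / (a1 * (a1 - 1)), one_div_pos.mpr (mul_pos_of_neg_of_neg ha hd), ?_, ?_⟩
  · rw [ht]
    exact div_ne_zero ha.ne hd.ne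
  · rw [ht, div_pow]
    field_simp [ha.ne, hd.ne]
    rw [div_lt_iff_of_neg (Odd.pow_neg (by decide) hd)]
    nlinarith [mul_pos (mul_pos_of_neg_of_neg ha ha) (neg_pos.mpr ha)]

lemma sq_norm_ofReal (x : ℝ) : ‖(x : ℂ)‖ ^ 2 = x ^ 2 := by
  rw [norm_real, Real.norm_eq_abs, sq_abs]

theorem exists_stabilityFunction_eq_one {a1 : ℝ} (ha : a1 < 0) :
    ∃ h k : ℂ, 2 * h.re + ‖k‖ ^ 2 < 0 ∧ 1 - (a1 : ℂ) * h ≠ 0 ∧ stabilityFunction a1 h k = 1 := by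
  obtain ⟨c, hc, ht, hsmall⟩ := exists_sq_one_add_mul_mul_lt_two ha
  set t := 1 + a1 * c with ht_def
  have hA : 1 - (a1 : ℂ) * ((-c : ℝ) : ℂ) = (t : ℂ) := by
    rw [ht_def]
    push_cast
    ring
  have hH : 1 - ((-c : ℝ) : ℂ) = ((1 + c : ℝ) : ℂ) := by
    push_cast
    ring
  have hK : ‖((t * √(2 * c + c ^ 2) : ℝ) : ℂ)‖ ^ 2 = t ^ 2 * (2 * c + c ^ 2) := by
    rw [sq_norm_ofReal, mul_pow, Real.sq_sqrt (by positivity)]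
  refine ⟨((-c : ℝ) : ℂ), ((t * √(2 * c + c ^ 2) : ℝ) : ℂ), ?_, ?_, ?_⟩
  · rw [ofReal_re, hK]
    nlinarith
  · rw [hA]
    exact ofReal_ne_zero.mpr ht
  · rw [stabilityFunction, hA, hH, hK, sq_norm_ofReal, sq_norm_ofReal]
    field_simp
    ring

/-- A-stability characterization of the order 0.5 stiffly accurate SRK scheme
with coefficients a2 = 0 (Lemma on order 0.5 schemes): the mean-square
stability function R̂(ĥ,k) = (|1 − a1·ĥ|² + |k|²)/(|1 − ĥ|²·|1 − a1·ĥ|²)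
satisfies R̂ < 1 on the whole mean-square stability domain
{2·Re(ĥ) + |k|² < 0} of the test equation (wherever R̂ is defined) if and
only if a1 ≥ 0. -/
theorem order05_Astable_iff (a1 : ℝ) :
    0 ≤ a1 ↔
      ∀ h k : ℂ, 2 * h.re + ‖k‖^2 < 0 → 1 - (a1 : ℂ) * h ≠ 0 →
        (‖1 - (a1 : ℂ) * h‖^2 + ‖k‖^2) / (‖1 - h‖^2 * ‖1 - (a1 : ℂ) * h‖^2) < 1 := by
  refine ⟨fun ha h k hdom _ => stabilityFunction_lt_one ha hdom, fun hstable => ?_⟩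
  by_contra! ha
  obtain ⟨h, k, hdom, hne, hone⟩ := exists_stabilityFunction_eq_one ha
  exact (hstable h k hdom hne).ne hone
end

section
/- Let a1, a2 ∈ ℝ satisfy a1 ≥ 0, 2·a2·(1 + a1) ≤ 1 + 4·a1, 2·a2·(1 − a1) ≤ 1, and a2 ≤ 1 (equivalently, a2 ≤ min{(1+4a1)/(2(1+a1)), 1/(2(1−a1)), 1}). Define, for ĥ, k ∈ ℂ with (1 − (1−a2)·ĥ) ≠ 0 and (1 − a1·ĥ) ≠ 0, R̂(ĥ,k) = (|1 + (a2 − a1)·ĥ|² + |k|²)/(|1 − (1−a2)·ĥ|²·|1 − a1·ĥ|²). Then for all ĥ, k ∈ ℂ with 2·Re(ĥ) + |k|² < 0, 1 − (1−a2)·ĥ ≠ 0 and 1 − a1·ĥ ≠ 0, one has R̂(ĥ,k) < 1; that is, the order 0.5 SRK scheme is A-stable. -/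
namespace Complex

lemma sq_norm_one_sub_ofReal_mul (c : ℝ) (h : ℂ) :
    ‖1 - (c : ℂ) * h‖ ^ 2 = 1 - 2 * c * h.re + c ^ 2 * ‖h‖ ^ 2 := by
  rw [Complex.sq_norm, Complex.sq_norm, normSq_apply, normSq_apply]
  simp only [sub_re, sub_im, one_re, one_im, mul_re, mul_im, ofReal_re, ofReal_im]
  ring

/-- Expanding both sides, the gap is
`(2(a+b) - 2ab - 1)|h|² + 4ab(Re h)² - 2ab(a+b)(Re h)|h|² + a²b²|h|⁴`,
a sum of nonnegative terms. -/
lemma sq_norm_one_sub_mul_sub_two_mul_re_le {a b : ℝ} (ha : 0 ≤ a) (hb : 0 ≤ b)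
    (hab : 1 ≤ 2 * (a + b) - 2 * a * b) {h : ℂ} (hh : h.re ≤ 0) :
    ‖1 - ((a + b - 1 : ℝ) : ℂ) * h‖ ^ 2 - 2 * h.re
      ≤ ‖1 - (b : ℂ) * h‖ ^ 2 * ‖1 - (a : ℂ) * h‖ ^ 2 := by
  simp only [sq_norm_one_sub_ofReal_mul]
  have hre : 0 ≤ -h.re := neg_nonneg.2 hh
  have hc : 0 ≤ 2 * (a + b) - 2 * a * b - 1 := sub_nonneg.2 hab
  have gap : 0 ≤ (2 * (a + b) - 2 * a * b - 1) * ‖h‖ ^ 2 + 4 * a * b * h.re ^ 2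
      + 2 * a * b * (a + b) * (-h.re) * ‖h‖ ^ 2 + (a * b * ‖h‖ ^ 2) ^ 2 := by
    positivity
  linear_combination gap

end Complex

theorem order05_Astable_general_general (a1 a2 : ℝ)
    (ha1 : 0 ≤ a1)
    (ha2b : 2 * a2 * (1 - a1) ≤ 1)
    (ha2c : a2 ≤ 1) :
    ∀ h k : ℂ, 2 * h.re + ‖k‖^2 < 0 →
      1 - ((1 : ℂ) - (a2 : ℂ)) * h ≠ 0 → 1 - (a1 : ℂ) * h ≠ 0 →
      (‖1 + ((a2 : ℂ) - (a1 : ℂ)) * h‖^2 + ‖k‖^2)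
        / (‖1 - ((1 : ℂ) - (a2 : ℂ)) * h‖^2 * ‖1 - (a1 : ℂ) * h‖^2) < 1 := by
  intro h k hdom hne1 hne2
  have hre : h.re ≤ 0 := by linarith [sq_nonneg ‖k‖]
  have key := Complex.sq_norm_one_sub_mul_sub_two_mul_re_le ha1 (sub_nonneg.2 ha2c)
    (by linarith) hre
  have hnum : (1 : ℂ) + (a2 - a1) * h = 1 - ((a1 + (1 - a2) - 1 : ℝ) : ℂ) * h := by
    push_cast; ring
  have hden : (1 : ℂ) - a2 = ((1 - a2 : ℝ) : ℂ) := by push_cast; ring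
  rw [hnum, hden, div_lt_one (by rw [← hden]; positivity)]
  linarith

/-- A-stability of the order 0.5 stiffly accurate SRK scheme with coefficients
a1 ≥ 0 and a2 ≤ min{(1+4a1)/(2(1+a1)), 1/(2(1−a1)), 1}: the mean-square
stability function
R̂(ĥ,k) = (|1 + (a2 − a1)·ĥ|² + |k|²)/(|1 − (1−a2)·ĥ|²·|1 − a1·ĥ|²)
is < 1 on the whole mean-square stability domain {2·Re(ĥ) + |k|² < 0} of the
test equation, wherever it is defined. -/
theorem order05_Astable_general (a1 a2 : ℝ)
    (ha1 : 0 ≤ a1)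
    (ha2a : 2 * a2 * (1 + a1) ≤ 1 + 4 * a1)
    (ha2b : 2 * a2 * (1 - a1) ≤ 1)
    (ha2c : a2 ≤ 1) :
    ∀ h k : ℂ, 2 * h.re + ‖k‖^2 < 0 →
      1 - ((1 : ℂ) - (a2 : ℂ)) * h ≠ 0 → 1 - (a1 : ℂ) * h ≠ 0 →
      (‖1 + ((a2 : ℂ) - (a1 : ℂ)) * h‖^2 + ‖k‖^2)
        / (‖1 - ((1 : ℂ) - (a2 : ℂ)) * h‖^2 * ‖1 - (a1 : ℂ) * h‖^2) < 1 :=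
  order05_Astable_general_general a1 a2 ha1 ha2b ha2c
end

section
/- Let a ∈ ℝ and define, for ĥ, k ∈ ℂ with (a·ĥ − 1) ≠ 0 and (ĥ − 1) ≠ 0, R̂(ĥ,k) = (|a·ĥ − 1|⁴ + (1/2)·|k|⁴ + |k|²·|a·ĥ − 1|²)/(|a·ĥ − 1|⁴·|ĥ − 1|²). Then the following are equivalent: (i) a ≥ 1/4; (ii) for all ĥ, k ∈ ℂ with 2·Re(ĥ) + |k|² < 0 and a·ĥ ≠ 1, one has R̂(ĥ,k) < 1. (This is the A-stability characterization of the class II strong order 1.0 SRK family with a1 = a2 = a and a3 = 1; note Re(ĥ) < 0 forces ĥ ≠ 1.) -/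
/-!
Write `A = ‖a ĥ - 1‖²`, `B = ‖ĥ - 1‖²`, `t = ‖k‖²` and `u = -Re ĥ`, so that `R̂ < 1` reads
`A² + t²/2 + t A < A² B` and the domain is `0 ≤ t < 2u`. Since the left side grows with `t`, only
the boundary `t = 2u` matters. For `a ≥ 1/4` one has `A ≥ (1 + a u)² ≥ 1 + u/2` and `B ≥ (1 + u)²`,
which already gives the inequality. For `a < 1/4`, on the real axis `ĥ = -u` the boundary defect
`A²(1+u)² - (A² + 2u² + 2uA)` equals `u² (φ(u) - 1)` with
`φ(u) = a (2 + a u) ((1 + a u)² (2 + u) + u)`, and `φ(0) = 4a < 1`; so it is negative for small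
`u > 0`, and by continuity also for some `t < 2u`.
-/

open Filter Topology

noncomputable def msStabilityFn (a : ℝ) (h k : ℂ) : ℝ :=
  (‖(a : ℂ) * h - 1‖^4 + (1/2) * ‖k‖^4 + ‖k‖^2 * ‖(a : ℂ) * h - 1‖^2)
    / (‖(a : ℂ) * h - 1‖^4 * ‖h - 1‖^2)

lemma Complex.re_sq_le_sq_norm (z : ℂ) : z.re ^ 2 ≤ ‖z‖ ^ 2 := by
  rw [Complex.sq_norm, sq]
  exact Complex.re_sq_le_normSq z

lemma msStabilityFn_eq (a : ℝ) (h k : ℂ) :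
    msStabilityFn a h k =
      ((‖(a : ℂ) * h - 1‖^2)^2 + (‖k‖^2)^2 / 2 + ‖k‖^2 * ‖(a : ℂ) * h - 1‖^2)
        / ((‖(a : ℂ) * h - 1‖^2)^2 * ‖h - 1‖^2) := by
  unfold msStabilityFn
  ring

lemma msNumerator_lt_denominator {A B t x : ℝ} (ht₀ : 0 ≤ t) (ht : 2 * x + t < 0)
    (hA : 1 - x / 2 ≤ A) (hB : (1 - x) ^ 2 ≤ B) :
    A ^ 2 + t ^ 2 / 2 + t * A < A ^ 2 * B := by
  have hx : x < 0 := by linarith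
  have hA₁ : 1 ≤ A := by linarith
  calc A ^ 2 + t ^ 2 / 2 + t * A
      < A ^ 2 + 2 * x ^ 2 - 2 * x * A := by nlinarith
    _ ≤ A ^ 2 * (1 - x) ^ 2 := by nlinarith [mul_le_mul_of_nonneg_left hA (by linarith : 0 ≤ -x)]
    _ ≤ A ^ 2 * B := by gcongr

lemma msStabilityFn_lt_one {a : ℝ} (ha : 1/4 ≤ a) {h k : ℂ} (hdom : 2 * h.re + ‖k‖^2 < 0) :
    msStabilityFn a h k < 1 := by
  have hA : 1 - h.re / 2 ≤ ‖(a : ℂ) * h - 1‖ ^ 2 := by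
    have := Complex.re_sq_le_sq_norm ((a : ℂ) * h - 1)
    simp only [Complex.sub_re, Complex.re_ofReal_mul, Complex.one_re] at this
    nlinarith [sq_nonneg (a * h.re), sq_nonneg ‖k‖]
  have hB : (1 - h.re) ^ 2 ≤ ‖h - 1‖ ^ 2 := by
    have := Complex.re_sq_le_sq_norm (h - 1)
    rwa [Complex.sub_re, Complex.one_re, ← neg_sub, neg_sq] at this
  have hnum := msNumerator_lt_denominator (sq_nonneg ‖k‖) hdom hA hB
  rw [msStabilityFn_eq, div_lt_one (lt_of_le_of_lt (by positivity) hnum)]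
  exact hnum

/-- The stability inequality fails at `ĥ = -u`, `‖k‖² = 2u`, where `A = (1 + a u)²`. -/
lemma exists_boundary_instability {a : ℝ} (ha : a < 1/4) :
    ∃ u : ℝ, 0 < u ∧ 0 < 1 + a * u ∧
      ((1 + a * u) ^ 2) ^ 2 * (1 + u) ^ 2 <
        ((1 + a * u) ^ 2) ^ 2 + (2 * u) ^ 2 / 2 + 2 * u * (1 + a * u) ^ 2 := by
  set φ : ℝ → ℝ := fun u => a * (2 + a * u) * ((1 + a * u) ^ 2 * (2 + u) + u)
  have hφ : ∀ᶠ u in 𝓝 0, φ u < 1 :=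
    (show Continuous φ by fun_prop).continuousAt.eventually_lt continuousAt_const
      (by simp only [φ]; linarith)
  have hpos : ∀ᶠ u in 𝓝 (0 : ℝ), 0 < 1 + a * u :=
    continuousAt_const.eventually_lt (by fun_prop) (by simp)
  have hnear : ∀ᶠ u in 𝓝[>] (0 : ℝ), (φ u < 1 ∧ 0 < 1 + a * u) ∧ 0 < u :=
    ((hφ.and hpos).filter_mono nhdsWithin_le_nhds).and self_mem_nhdsWithin
  obtain ⟨u, ⟨hφu, hu₁⟩, hu⟩ := hnear.exists
  refine ⟨u, hu, hu₁, ?_⟩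
  have hdefect : ((1 + a * u) ^ 2) ^ 2 * (1 + u) ^ 2
      - (((1 + a * u) ^ 2) ^ 2 + (2 * u) ^ 2 / 2 + 2 * u * (1 + a * u) ^ 2) = u ^ 2 * (φ u - 1) := by
    simp only [φ]; ring
  linarith [mul_neg_of_pos_of_neg (pow_pos hu 2) (sub_neg.mpr hφu)]

lemma exists_one_le_msStabilityFn {a : ℝ} (ha : a < 1/4) :
    ∃ h k : ℂ, 2 * h.re + ‖k‖^2 < 0 ∧ (a : ℂ) * h ≠ 1 ∧ 1 ≤ msStabilityFn a h k := by
  obtain ⟨u, hu, hau, hfail⟩ := exists_boundary_instability ha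
  set A := (1 + a * u) ^ 2
  have ht : ∀ᶠ t in 𝓝[<] (2 * u), 0 ≤ t ∧ A ^ 2 * (1 + u) ^ 2 < A ^ 2 + t ^ 2 / 2 + t * A :=
    ((eventually_ge_nhds (show (0 : ℝ) < 2 * u by linarith)).and
      (continuousAt_const.eventually_lt (by fun_prop) hfail)).filter_mono nhdsWithin_le_nhds
  obtain ⟨t, ⟨ht₀, htfail⟩, ht2u⟩ := (ht.and self_mem_nhdsWithin).exists
  have hA : ‖(a : ℂ) * -(u : ℂ) - 1‖ ^ 2 = A := by
    rw [show (a : ℂ) * -(u : ℂ) - 1 = ((-(1 + a * u) : ℝ) : ℂ) by push_cast; ring,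
      Complex.norm_real, Real.norm_eq_abs, sq_abs, neg_sq]
  have hB : ‖-(u : ℂ) - 1‖ ^ 2 = (1 + u) ^ 2 := by
    rw [show -(u : ℂ) - 1 = ((-(1 + u) : ℝ) : ℂ) by push_cast; ring,
      Complex.norm_real, Real.norm_eq_abs, sq_abs, neg_sq]
  have hk : ‖((√t : ℝ) : ℂ)‖ ^ 2 = t := by
    rw [Complex.norm_real, Real.norm_eq_abs, sq_abs, Real.sq_sqrt ht₀]
  refine ⟨-(u : ℂ), ((√t : ℝ) : ℂ), ?_, ?_, ?_⟩
  · rw [hk]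
    simp only [Complex.neg_re, Complex.ofReal_re]
    linarith [show t < 2 * u from ht2u]
  · intro h1
    have hA0 : A = 0 := by rw [← hA, h1, sub_self, norm_zero, sq, zero_mul]
    exact (pow_pos hau 2).ne' hA0
  · rw [msStabilityFn_eq, hA, hB, hk, one_le_div (by positivity)]
    exact htfail.le

/-- A-stability characterization of the class II strong order 1.0 SRK family
with a1 = a2 = a and a3 = 1: the mean-square stability function
R̂(ĥ,k) = (|a·ĥ − 1|⁴ + (1/2)·|k|⁴ + |k|²·|a·ĥ − 1|²)/(|a·ĥ − 1|⁴·|ĥ − 1|²)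
satisfies R̂ < 1 on the whole mean-square stability domain
{2·Re(ĥ) + |k|² < 0} of the test equation (wherever a·ĥ ≠ 1) if and only if
a ≥ 1/4. -/
theorem order10_classII_diag_Astable_iff (a : ℝ) :
    1/4 ≤ a ↔
      ∀ h k : ℂ, 2 * h.re + ‖k‖^2 < 0 → (a : ℂ) * h ≠ 1 →
        (‖(a : ℂ) * h - 1‖^4 + (1/2) * ‖k‖^4 + ‖k‖^2 * ‖(a : ℂ) * h - 1‖^2)
          / (‖(a : ℂ) * h - 1‖^4 * ‖h - 1‖^2) < 1 := by
  refine ⟨fun ha h k hdom _ => msStabilityFn_lt_one ha hdom, fun hstable => ?_⟩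
  by_contra! ha
  obtain ⟨h, k, hdom, hne, hR⟩ := exists_one_le_msStabilityFn ha
  exact (hstable h k hdom hne).not_ge hR
end

section
/- Let a2, a3 ∈ ℝ with a2 ≥ 0 and a3 ≥ 3/2. For ĥ, k ∈ ℂ with a2·ĥ ≠ 1 and a3·ĥ ≠ 1, define R̂(ĥ,k) = [ (1/2)·|k|⁴ + |a2·ĥ − 1|²·( |k|² + |ĥ|²·(1 − a3)² + 2·Re(ĥ)·(1 − a3) + 1 ) ] / ( |a2·ĥ − 1|²·|a3·ĥ − 1|² ). Then for all ĥ, k ∈ ℂ with 2·Re(ĥ) + |k|² < 0, a2·ĥ ≠ 1 and a3·ĥ ≠ 1, one has R̂(ĥ,k) < 1; that is, the class II order 1.0 SRK family with a1 = 0 is A-stable. -/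
/-! Write `A = |a₂ĥ - 1|²`, `B = |a₃ĥ - 1|²` and `K = |k|²`. Expanding `B` shows that the
numerator of `R̂` equals `K²/2 + A·(B - g)` with `g = (2a₃ - 1)|ĥ|² - 2 Re ĥ - K`, so `R̂ < 1`
amounts to `K²/2 < A·g`. On the stability domain `0 ≤ K < -2 Re ĥ`, hence `Re ĥ < 0`, so
`A ≥ 1` when `a₂ ≥ 0`, and `K²/2 < 2 (Re ĥ)² ≤ 2|ĥ|² ≤ (2a₃ - 1)|ĥ|² < g` when `a₃ ≥ 3/2`. -/

namespace Complex

lemma norm_ofReal_mul_sub_one_sq (a : ℝ) (h : ℂ) :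
    ‖(a : ℂ) * h - 1‖ ^ 2 = a ^ 2 * ‖h‖ ^ 2 - 2 * a * h.re + 1 := by
  simp only [Complex.sq_norm, normSq_apply, sub_re, sub_im, mul_re, mul_im, ofReal_re, ofReal_im,
    one_re, one_im]
  ring

lemma one_le_norm_ofReal_mul_sub_one_sq {a : ℝ} {h : ℂ} (ha : 0 ≤ a) (hh : h.re ≤ 0) :
    1 ≤ ‖(a : ℂ) * h - 1‖ ^ 2 := by
  rw [norm_ofReal_mul_sub_one_sq]
  nlinarith [mul_nonneg ha (neg_nonneg.mpr hh), sq_nonneg (a * ‖h‖)]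

end Complex

open Complex

lemma sq_half_lt_stability_gap {a3 K : ℝ} {h : ℂ} (ha3 : 3 / 2 ≤ a3) (hK : 0 ≤ K)
    (hd : 2 * h.re + K < 0) :
    K ^ 2 / 2 < (2 * a3 - 1) * ‖h‖ ^ 2 - 2 * h.re - K := by
  have hre : h.re ^ 2 ≤ ‖h‖ ^ 2 := by linarith [sq_norm_sub_sq_re h, sq_nonneg h.im]
  calc K ^ 2 / 2 ≤ 2 * h.re ^ 2 := by nlinarith
    _ ≤ (2 * a3 - 1) * ‖h‖ ^ 2 := by nlinarith [sq_nonneg ‖h‖]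
    _ < (2 * a3 - 1) * ‖h‖ ^ 2 - 2 * h.re - K := by linarith

/-- A-stability of the class II strong order 1.0 SRK family with an explicit
first stage (a1 = 0): for a2 ≥ 0 and a3 ≥ 3/2, the mean-square stability
function
R̂(ĥ,k) = [(1/2)|k|⁴ + |a2·ĥ − 1|²·(|k|² + |ĥ|²(1 − a3)² + 2·Re(ĥ)(1 − a3) + 1)]
          / (|a2·ĥ − 1|²·|a3·ĥ − 1|²)
is < 1 on the whole mean-square stability domain {2·Re(ĥ) + |k|² < 0} of the
test equation, wherever it is defined. -/
theorem order10_classII_explicit_Astable (a2 a3 : ℝ)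
    (ha2 : 0 ≤ a2) (ha3 : 3/2 ≤ a3) :
    ∀ h k : ℂ, 2 * h.re + ‖k‖^2 < 0 →
      (a2 : ℂ) * h ≠ 1 → (a3 : ℂ) * h ≠ 1 →
      ((1/2) * ‖k‖^4
        + ‖(a2 : ℂ) * h - 1‖^2
          * (‖k‖^2 + ‖h‖^2 * (1 - a3)^2 + 2 * h.re * (1 - a3) + 1))
        / (‖(a2 : ℂ) * h - 1‖^2 * ‖(a3 : ℂ) * h - 1‖^2) < 1 := by
  intro h k hd _ hne3
  have hK : 0 ≤ ‖k‖ ^ 2 := sq_nonneg _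
  have hA : 1 ≤ ‖(a2 : ℂ) * h - 1‖ ^ 2 :=
    one_le_norm_ofReal_mul_sub_one_sq ha2 (by linarith)
  have hB : 0 < ‖(a3 : ℂ) * h - 1‖ ^ 2 := by
    have := sub_ne_zero.mpr hne3; positivity
  have hgap := sq_half_lt_stability_gap ha3 hK hd
  have hnum : ‖(a3 : ℂ) * h - 1‖ ^ 2
      - (‖k‖^2 + ‖h‖^2 * (1 - a3)^2 + 2 * h.re * (1 - a3) + 1)
      = (2 * a3 - 1) * ‖h‖ ^ 2 - 2 * h.re - ‖k‖ ^ 2 := by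
    rw [norm_ofReal_mul_sub_one_sq]; ring
  have hA_gap : (2 * a3 - 1) * ‖h‖ ^ 2 - 2 * h.re - ‖k‖ ^ 2
      ≤ ‖(a2 : ℂ) * h - 1‖ ^ 2 * ((2 * a3 - 1) * ‖h‖ ^ 2 - 2 * h.re - ‖k‖ ^ 2) :=
    le_mul_of_one_le_left (by linarith [sq_nonneg (‖k‖ ^ 2)]) hA
  rw [div_lt_one (by positivity)]
  linear_combination hgap + hA_gap - ‖(a2 : ℂ) * h - 1‖ ^ 2 * hnum
end

section
/- Let a2, a3 ∈ ℝ with a2 ≥ 0 and a3 ≥ 3/2. For ĥ, k ∈ ℂ with a2·ĥ ≠ 1 and a3·ĥ ≠ 1, define R̂(ĥ,k) = [ (1/2)·|k|⁴ + |1 − a2·ĥ|²·( |k|² + |ĥ|²·(1 − 2·a3) + 2·Re(ĥ) + |1 − a3·ĥ|² ) ] / ( |a2·ĥ − 1|²·|a3·ĥ − 1|² ). Then for all ĥ, k ∈ ℂ with 2·Re(ĥ) + |k|² < 0, a2·ĥ ≠ 1 and a3·ĥ ≠ 1, one has R̂(ĥ,k) < 1; that is, the class X order 1.0 SRK family with a1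 = 0 and a4 = −a2 is A-stable. -/
/-!
Write `s = Re ĥ`, `P = |1 - a2 ĥ|²`, `Q = |1 - a3 ĥ|²`. Then `R̂ < 1` is equivalent to
`|k|⁴/2 + P (|k|² + 2s) < (2a3 - 1) P |ĥ|²`. On the stability domain `s < 0`, so `P ≥ 1`, and the
second summand on the left is negative, while `|k|² < -2s` gives
`|k|⁴/2 < 2s² ≤ 2|ĥ|² ≤ (2a3 - 1) P |ĥ|²` as soon as `a3 ≥ 3/2`.
-/

lemma one_le_norm_one_sub_ofReal_mul {t : ℝ} {z : ℂ} (ht : 0 ≤ t) (hz : z.re ≤ 0) :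
    1 ≤ ‖1 - (t : ℂ) * z‖ :=
  calc (1 : ℝ) ≤ 1 - t * z.re := by nlinarith
    _ = (1 - (t : ℂ) * z).re := by simp
    _ ≤ ‖1 - (t : ℂ) * z‖ := Complex.re_le_norm _

lemma msStabilityFunction_lt_one {a r s n P Q : ℝ} (ha : 3/2 ≤ a) (hdom : 2 * s + r^2 < 0)
    (hsn : s^2 ≤ n) (hP : 1 ≤ P) (hQ : 0 < Q) :
    ((1/2) * r^4 + P * (r^2 + n * (1 - 2*a) + 2 * s + Q)) / (P * Q) < 1 := by
  rw [div_lt_one (by positivity)]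
  have hr4 : (1/2) * r^4 < 2 * s^2 := by nlinarith [sq_nonneg r]
  have hn : 2 * s^2 ≤ P * (n * (2*a - 1)) :=
    calc 2 * s^2 ≤ n * (2*a - 1) := by nlinarith [sq_nonneg s]
      _ ≤ P * (n * (2*a - 1)) := le_mul_of_one_le_left (by nlinarith [sq_nonneg s]) hP
  have hdrift : P * (r^2 + 2 * s) < 0 := mul_neg_of_pos_of_neg (by linarith) (by linarith)
  nlinarith

/-- A-stability of the class X strong order 1.0 SRK family with an explicit
first stage (a1 = 0) and a4 = −a2: for a2 ≥ 0 and a3 ≥ 3/2, the mean-square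
stability function
R̂(ĥ,k) = [(1/2)|k|⁴ + |1 − a2·ĥ|²·(|k|² + |ĥ|²(1 − 2a3) + 2·Re(ĥ) + |1 − a3·ĥ|²)]
          / (|a2·ĥ − 1|²·|a3·ĥ − 1|²)
is < 1 on the whole mean-square stability domain {2·Re(ĥ) + |k|² < 0} of the
test equation, wherever it is defined. -/
theorem order10_classX_explicit_Astable (a2 a3 : ℝ)
    (ha2 : 0 ≤ a2) (ha3 : 3/2 ≤ a3) :
    ∀ h k : ℂ, 2 * h.re + ‖k‖^2 < 0 →
      (a2 : ℂ) * h ≠ 1 → (a3 : ℂ) * h ≠ 1 →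
      ((1/2) * ‖k‖^4
        + ‖1 - (a2 : ℂ) * h‖^2
          * (‖k‖^2 + ‖h‖^2 * (1 - 2*a3) + 2 * h.re + ‖1 - (a3 : ℂ) * h‖^2))
        / (‖(a2 : ℂ) * h - 1‖^2 * ‖(a3 : ℂ) * h - 1‖^2) < 1 := by
  intro h k hdom _ h3
  have hre : h.re ≤ 0 := by nlinarith [sq_nonneg ‖k‖]
  have hsn : h.re^2 ≤ ‖h‖^2 := by
    simpa only [sq_abs] using pow_le_pow_left₀ (abs_nonneg _) (Complex.abs_re_le_norm h) 2
  have hP : 1 ≤ ‖1 - (a2 : ℂ) * h‖^2 :=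
    one_le_pow₀ (one_le_norm_one_sub_ofReal_mul ha2 hre)
  have hQ : 0 < ‖1 - (a3 : ℂ) * h‖^2 := by
    have : 1 - (a3 : ℂ) * h ≠ 0 := sub_ne_zero.mpr (Ne.symm h3)
    positivity
  rw [norm_sub_rev ((a2 : ℂ) * h), norm_sub_rev ((a3 : ℂ) * h)]
  exact msStabilityFunction_lt_one ha3 hdom hsn hP hQ
end
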